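/- arXiv:1510.08786 — 3 statements merged into one kernel-verified Lean document; each statement's English description precedes it below -/
import Mathlib

section
/- Every biclique covering of the complete graph Kₙ on n vertices has weight at least n · log₂ n. Here the weight of a covering (A₁×B₁, …, A_k×B_k) is Σᵢ (|Aᵢ| + |Bᵢ|). -/
-- analytic lemma
lemma keyAnalytic (n : ℕ) (d : Fin n → ℕ)
    (h : ∑ v, ((2:ℝ) ^ (d v))⁻¹ ≤ 1) :
    (n : ℝ) * Real.logb 2 n ≤ ∑ v, (d v : ℝ) := by
  rcases Nat.eq_zero_or_pos n with hn | hn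
  · subst hn; simp
  have hn' : (0:ℝ) < n := by exact_mod_cast hn
  have hw : ∑ _v : Fin n, (1:ℝ)/n = 1 := by
    simp [Finset.sum_const]
    field_simp
  have hgm := Real.geom_mean_le_arith_mean_weighted Finset.univ
      (fun _ => (1:ℝ)/n) (fun v => ((2:ℝ) ^ (d v))⁻¹)
      (fun i _ => by positivity) hw (fun i _ => by positivity)
  have hprod : ∏ v : Fin n, (((2:ℝ) ^ (d v))⁻¹) ^ ((1:ℝ)/n)
      = (((2:ℝ) ^ (∑ v, d v))⁻¹) ^ ((1:ℝ)/n) := by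
    rw [Real.finset_prod_rpow _ _ (fun i _ => by positivity)]
    congr 1
    rw [Finset.prod_inv_distrib, ← Finset.prod_pow_eq_pow_sum]
  have hsum : ∑ v : Fin n, (1:ℝ)/n * ((2:ℝ) ^ (d v))⁻¹ ≤ 1/n := by
    rw [← Finset.mul_sum]
    rw [div_mul_eq_mul_div, one_mul, div_le_div_iff₀ hn' hn']
    nlinarith
  rw [hprod] at hgm
  have hkey : (((2:ℝ) ^ (∑ v, d v))⁻¹) ^ ((1:ℝ)/n) ≤ 1/n := le_trans hgm hsum
  -- invert
  set S : ℕ := ∑ v, d v with hS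
  have h2 : (0:ℝ) < (2:ℝ)^S := by positivity
  have hinv : (n:ℝ) ≤ ((2:ℝ)^S) ^ ((n:ℝ)⁻¹) := by
    rw [Real.inv_rpow (le_of_lt h2), one_div] at hkey
    exact (inv_le_inv₀ (by positivity) hn').mp hkey
  have hrw : ((2:ℝ)^S) ^ ((n:ℝ)⁻¹) = (2:ℝ) ^ ((S:ℝ)/n) := by
    rw [← Real.rpow_natCast 2 S, ← Real.rpow_mul (by norm_num)]
    ring_nf
  rw [hrw] at hinv
  have hlog : Real.logb 2 n ≤ (S:ℝ)/n :=
    (Real.logb_le_iff_le_rpow (by norm_num) hn').mpr hinv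
  have : (n:ℝ) * Real.logb 2 n ≤ (S:ℝ) := by
    have := mul_le_mul_of_nonneg_left hlog (le_of_lt hn')
    rwa [mul_div_cancel₀ _ (ne_of_gt hn')] at this
  calc (n:ℝ) * Real.logb 2 n ≤ (S:ℝ) := this
    _ = ∑ v, (d v : ℝ) := by rw [hS]; push_cast; ring

section
variable {n k : ℕ} (A B : Fin k → Finset (Fin n))

-- per-coordinate card
lemma cardCoord (hdisj : ∀ i, Disjoint (A i) (B i)) (v : Fin n) (i : Fin k) :
    Fintype.card {b : Bool // (v ∈ A i → b = true) ∧ (v ∈ B i → b = false)}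
      = if v ∈ A i ∨ v ∈ B i then 1 else 2 := by
  by_cases hA : v ∈ A i
  · have hB : v ∉ B i := Finset.disjoint_left.mp (hdisj i) hA
    rw [if_pos (Or.inl hA)]
    rw [Fintype.card_congr (Equiv.subtypeEquivRight (q := fun b => b = true)
      (fun b => by constructor
                   · rintro ⟨h1, _⟩; exact h1 hA
                   · rintro rfl; exact ⟨fun _ => rfl, fun h => absurd h hB⟩))]
    exact Fintype.card_subtype_eq true
  · by_cases hB : v ∈ B i
    · rw [if_pos (Or.inr hB)]
      rw [Fintype.card_congr (Equiv.subtypeEquivRight (q := fun b => b = false)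
        (fun b => by constructor
                     · rintro ⟨_, h2⟩; exact h2 hB
                     · rintro rfl; exact ⟨fun h => absurd h hA, fun _ => rfl⟩))]
      exact Fintype.card_subtype_eq false
    · rw [if_neg (by tauto)]
      rw [Fintype.card_congr (Equiv.subtypeUnivEquiv
        (fun b => ⟨fun h => absurd h hA, fun h => absurd h hB⟩))]
      simp

-- survivors count
lemma survCount (hdisj : ∀ i, Disjoint (A i) (B i)) (v : Fin n) :
    Fintype.card {σ : Fin k → Bool //
        ∀ i, (v ∈ A i → σ i = true) ∧ (v ∈ B i → σ i = false)}
      = 2 ^ (k - (Finset.univ.filter fun i => v ∈ A i ∨ v ∈ B i).card) := by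
  rw [Fintype.card_congr (Equiv.subtypePiEquivPi
    (p := fun i b => (v ∈ A i → b = true) ∧ (v ∈ B i → b = false)))]
  rw [Fintype.card_pi]
  calc ∏ i, Fintype.card {b : Bool // (v ∈ A i → b = true) ∧ (v ∈ B i → b = false)}
      = ∏ i, (if v ∈ A i ∨ v ∈ B i then 1 else 2) := by
        exact Finset.prod_congr rfl fun i _ => cardCoord A B hdisj v i
    _ = 2 ^ (k - (Finset.univ.filter fun i => v ∈ A i ∨ v ∈ B i).card) := by
        rw [Finset.prod_ite, Finset.prod_const, Finset.prod_const, one_pow, one_mul]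
        congr 1
        rw [Finset.filter_not, Finset.card_sdiff_of_subset (Finset.filter_subset _ _)]
        simp

-- sum over vertices bounded
lemma survSumLe (hdisj : ∀ i, Disjoint (A i) (B i))
    (hcover : ∀ u v : Fin n, u ≠ v →
      ∃ i, (u ∈ A i ∧ v ∈ B i) ∨ (u ∈ B i ∧ v ∈ A i)) :
    ∑ v : Fin n, 2 ^ (k - (Finset.univ.filter fun i => v ∈ A i ∨ v ∈ B i).card) ≤ 2 ^ k := by
  have hinj : Function.Injective
      (fun x : (Σ v : Fin n, {σ : Fin k → Bool //
        ∀ i, (v ∈ A i → σ i = true) ∧ (v ∈ B i → σ i = false)}) => (x.2 : Fin k → Bool)) := by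
    rintro ⟨u, σ, hσ⟩ ⟨v, τ, hτ⟩ h
    simp only at h
    have huv : u = v := by
      by_contra hne
      obtain ⟨i, hi⟩ := hcover u v hne
      rcases hi with ⟨hA, hB⟩ | ⟨hB, hA⟩
      · have h1 := (hσ i).1 hA
        have h2 := (hτ i).2 hB
        rw [h] at h1; rw [h1] at h2; exact Bool.noConfusion h2
      · have h1 := (hσ i).2 hB
        have h2 := (hτ i).1 hA
        rw [h] at h1; rw [h1] at h2; exact Bool.noConfusion h2
    subst huv
    exact congrArg (Sigma.mk u) (Subtype.ext h)
  have hle := Fintype.card_le_of_injective _ hinj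
  rw [Fintype.card_sigma] at hle
  calc ∑ v : Fin n, 2 ^ (k - (Finset.univ.filter fun i => v ∈ A i ∨ v ∈ B i).card)
      = ∑ v : Fin n, Fintype.card {σ : Fin k → Bool //
          ∀ i, (v ∈ A i → σ i = true) ∧ (v ∈ B i → σ i = false)} := by
        exact Finset.sum_congr rfl fun v _ => (survCount A B hdisj v).symm
    _ ≤ Fintype.card (Fin k → Bool) := hle
    _ = 2 ^ k := by simp [Fintype.card_fun]
end

lemma doubleCount {n k : ℕ} (A B : Fin k → Finset (Fin n))
    (hdisj : ∀ i, Disjoint (A i) (B i)) :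
    ∑ i, ((A i).card + (B i).card)
      = ∑ v : Fin n, (Finset.univ.filter fun i => v ∈ A i ∨ v ∈ B i).card := by
  calc ∑ i, ((A i).card + (B i).card)
      = ∑ i, ((A i) ∪ (B i)).card := by
        exact Finset.sum_congr rfl fun i _ => (Finset.card_union_of_disjoint (hdisj i)).symm
    _ = ∑ i, ∑ v : Fin n, (if v ∈ A i ∨ v ∈ B i then 1 else 0) := by
        refine Finset.sum_congr rfl fun i _ => ?_
        rw [← Finset.card_filter]
        congr 1
        ext v
        simp [Finset.mem_filter, Finset.mem_union]
    _ = ∑ v : Fin n, ∑ i, (if v ∈ A i ∨ v ∈ B i then 1 else 0) := Finset.sum_comm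
    _ = ∑ v : Fin n, (Finset.univ.filter fun i => v ∈ A i ∨ v ∈ B i).card := by
        refine Finset.sum_congr rfl fun v _ => ?_
        rw [Finset.card_filter]

/-- Every biclique covering of the complete graph `Kₙ` has weight at least `n · log₂ n`.
A biclique covering is a sequence of pairs of disjoint vertex sets `(Aᵢ, Bᵢ)` such that
every edge `{u,v}` of `Kₙ` (i.e. every pair of distinct vertices) lies in some
`Aᵢ × Bᵢ` (in one of the two orientations); disjointness of `Aᵢ` and `Bᵢ` guarantees
conversely that every pair in `Aᵢ × Bᵢ` is an edge of `Kₙ`.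
Its weight is `Σᵢ (|Aᵢ| + |Bᵢ|)`. -/
theorem biclique_cover_weight_lower_bound (n k : ℕ)
    (A B : Fin k → Finset (Fin n))
    (hdisj : ∀ i, Disjoint (A i) (B i))
    (hcover : ∀ u v : Fin n, u ≠ v →
      ∃ i, (u ∈ A i ∧ v ∈ B i) ∨ (u ∈ B i ∧ v ∈ A i)) :
    (n : ℝ) * Real.logb 2 n ≤ ((∑ i, ((A i).card + (B i).card) : ℕ) : ℝ) := by
  set d : Fin n → ℕ := fun v => (Finset.univ.filter fun i => v ∈ A i ∨ v ∈ B i).card with hd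
  have hdk : ∀ v, d v ≤ k := fun v => by
    simpa using Finset.card_filter_le Finset.univ (fun i => v ∈ A i ∨ v ∈ B i)
  have hnat : ∑ v : Fin n, 2 ^ (k - d v) ≤ 2 ^ k := survSumLe A B hdisj hcover
  have hreal : ∑ v : Fin n, ((2:ℝ) ^ (d v))⁻¹ ≤ 1 := by
    have h2k : (0:ℝ) < 2 ^ k := by positivity
    have : ∑ v : Fin n, ((2:ℝ) ^ (d v))⁻¹ = (∑ v : Fin n, (2:ℝ) ^ (k - d v)) / 2 ^ k := by
      rw [Finset.sum_div]
      refine Finset.sum_congr rfl fun v _ => ?_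
      rw [eq_div_iff (ne_of_gt h2k), inv_mul_eq_div]
      rw [div_eq_iff (by positivity : ((2:ℝ) ^ d v) ≠ 0), ← pow_add]
      congr 1
      have := hdk v
      omega
    rw [this, div_le_one h2k]
    exact_mod_cast hnat
  have hmain := keyAnalytic n d hreal
  rw [doubleCount A B hdisj]
  push_cast
  exact hmain
end

section
/- Let ψ₁, …, ψₙ be satisfiable propositional formulas that are pairwise contradicting (each ψᵢ is satisfiable, but ψᵢ ∧ ψⱼ is unsatisfiable for i ≠ j), where each ψᵢ is a conjunction of literals. Then the total number of literal occurrences across ψ₁,…,ψₙ is at least n · log₂ n. -/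
/-!
Under a uniformly random assignment, a satisfiable conjunction of literals holds with probability
`2^(-k)`, where `k ≤ ⟨ψ⟩` is its number of distinct variables. Pairwise contradicting conjunctions
give disjoint events, so `∑ 2^(-⟨ψᵢ⟩) ≤ 1` (Kraft's inequality). By AM-GM,
`2^(-(∑ ⟨ψᵢ⟩) / n) ≤ (1/n) ∑ 2^(-⟨ψᵢ⟩) ≤ 1/n`, that is `∑ ⟨ψᵢ⟩ ≥ n log₂ n`.
-/

/-- A conjunction of literals, represented as a list of (variable, polarity) pairs,
is satisfied by an assignment `θ` iff every literal agrees with `θ`. -/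
def LitConjSat (θ : ℕ → Bool) (L : List (ℕ × Bool)) : Prop :=
  ∀ l ∈ L, θ l.1 = l.2

open MeasureTheory

theorem card_mul_logb_card_le_sum {ι : Type*} [Fintype ι] (x : ι → ℝ)
    (hkraft : ∑ i, (2 : ℝ) ^ (-x i) ≤ 1) :
    (Fintype.card ι : ℝ) * Real.logb 2 (Fintype.card ι) ≤ ∑ i, x i := by
  obtain hι | hι := isEmpty_or_nonempty ι
  · simp
  set n : ℝ := (Fintype.card ι : ℝ)
  have hn : 0 < n := by positivity
  have amgm : (2 : ℝ) ^ (-(∑ i, x i) / n) ≤ n⁻¹ := calc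
    (2 : ℝ) ^ (-(∑ i, x i) / n) = ∏ i, ((2 : ℝ) ^ (-x i)) ^ n⁻¹ := by
      simp_rw [← Real.rpow_mul zero_le_two, ← Real.rpow_sum_of_pos two_pos, ← Finset.sum_mul,
        Finset.sum_neg_distrib, div_eq_mul_inv]
    _ ≤ ∑ i, n⁻¹ * (2 : ℝ) ^ (-x i) :=
      Real.geom_mean_le_arith_mean_weighted _ _ _ (fun _ _ ↦ by positivity)
        (by simp [n, hn.ne']) (fun _ _ ↦ by positivity)
    _ ≤ n⁻¹ := by rw [← Finset.mul_sum]; exact mul_le_of_le_one_right (by positivity) hkraft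
  have hlogb : Real.logb 2 n ≤ (∑ i, x i) / n := by
    rw [Real.logb_le_iff_le_rpow one_lt_two hn]
    rw [neg_div, Real.rpow_neg zero_le_two] at amgm
    exact (inv_le_inv₀ (by positivity) hn).mp amgm
  rwa [← le_div_iff₀' hn]

theorem LitConjSat.setOf_eq_pi {θ : ℕ → Bool} {L : List (ℕ × Bool)} (hθ : LitConjSat θ L) :
    {σ | LitConjSat σ L} = Set.pi (L.map Prod.fst).toFinset (fun x ↦ {θ x}) := by
  ext σ
  simp only [Set.mem_pi, Finset.mem_coe, List.mem_toFinset, List.mem_map,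
    Set.mem_singleton_iff, forall_exists_index, and_imp, forall_apply_eq_imp_iff₂]
  exact forall₂_congr fun l hl ↦ by rw [hθ l hl]

noncomputable def randomAssignment : Measure (ℕ → Bool) :=
  Measure.infinitePi fun _ ↦ (PMF.uniformOfFintype Bool).toMeasure

instance : IsProbabilityMeasure randomAssignment := by
  unfold randomAssignment; infer_instance

theorem LitConjSat.randomAssignment_setOf {θ : ℕ → Bool} {L : List (ℕ × Bool)}
    (hθ : LitConjSat θ L) :
    randomAssignment {σ | LitConjSat σ L} = 2⁻¹ ^ (L.map Prod.fst).toFinset.card := by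
  rw [hθ.setOf_eq_pi, randomAssignment, Measure.infinitePi_pi _ fun _ _ ↦ .singleton _]
  simp [PMF.uniformOfFintype_apply]

theorem inv_two_pow_length_le_randomAssignment {L : List (ℕ × Bool)}
    (hsat : ∃ θ, LitConjSat θ L) :
    2⁻¹ ^ L.length ≤ randomAssignment {σ | LitConjSat σ L} := by
  obtain ⟨θ, hθ⟩ := hsat
  rw [hθ.randomAssignment_setOf]
  refine pow_le_pow_right_of_le_one' (by norm_num) ?_
  exact (List.toFinset_card_le _).trans (List.length_map _).le

theorem sum_inv_two_pow_length_le_one {ι : Type*} [Fintype ι] (ψ : ι → List (ℕ × Bool))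
    (hsat : ∀ i, ∃ θ, LitConjSat θ (ψ i))
    (hcontra : ∀ i j, i ≠ j → ¬ ∃ θ, LitConjSat θ (ψ i) ∧ LitConjSat θ (ψ j)) :
    ∑ i, (2⁻¹ : ℝ) ^ (ψ i).length ≤ 1 := by
  have hdisj : Pairwise fun i j ↦ Disjoint {σ | LitConjSat σ (ψ i)} {σ | LitConjSat σ (ψ j)} :=
    fun i j hij ↦ Set.disjoint_left.mpr fun σ hi hj ↦ hcontra i j hij ⟨σ, hi, hj⟩
  have hmeas (i : ι) : MeasurableSet {σ | LitConjSat σ (ψ i)} := by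
    obtain ⟨θ, hθ⟩ := hsat i
    rw [hθ.setOf_eq_pi]
    exact .pi (Set.to_countable _) fun _ _ ↦ .singleton _
  have hkraft : ∑ i, (2⁻¹ : ENNReal) ^ (ψ i).length ≤ 1 := calc
    _ ≤ ∑ i, randomAssignment {σ | LitConjSat σ (ψ i)} :=
      Finset.sum_le_sum fun i _ ↦ inv_two_pow_length_le_randomAssignment (hsat i)
    _ = randomAssignment (⋃ i, {σ | LitConjSat σ (ψ i)}) := by
      rw [measure_iUnion hdisj hmeas, tsum_fintype]
    _ ≤ 1 := prob_le_one
  simpa [ENNReal.toReal_sum, ENNReal.toReal_inv] using ENNReal.toReal_mono ENNReal.one_ne_top hkraft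

/-- If `ψ₁, …, ψₙ` are satisfiable conjunctions of literals that are pairwise
contradicting (each is satisfiable but no two are jointly satisfiable), then the
total number of literal occurrences is at least `n · log₂ n`. -/
theorem contradicting_conjunctions_lower_bound (n : ℕ) (ψ : Fin n → List (ℕ × Bool))
    (hsat : ∀ i, ∃ θ, LitConjSat θ (ψ i))
    (hcontra : ∀ i j, i ≠ j → ¬ ∃ θ, LitConjSat θ (ψ i) ∧ LitConjSat θ (ψ j)) :
    (n : ℝ) * Real.logb 2 n ≤ ((∑ i, (ψ i).length : ℕ) : ℝ) := by
  have hkraft : ∑ i, (2 : ℝ) ^ (-((ψ i).length : ℝ)) ≤ 1 := by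
    simpa [Real.rpow_neg] using sum_inv_two_pow_length_le_one ψ hsat hcontra
  simpa using card_mul_logb_card_le_sum _ hkraft
end

section
/- Substituting ⊤ by a fresh proposition in a pseudo-monotone CTL formula preserves satisfiability over the same frames: if φ is pseudo-monotone over a Boolean base containing ∧ and possibly ⊤, t is a proposition not in φ, and ψ := φ' ∧ t is obtained by replacing every ⊤ with t and relativizing every temporal argument ξ to ξ ∧ t, then φ and ψ are frame-equivalent, i.e., (W,R,V,w) ⊨ φ for some valuation V iff (W,R,V',w) ⊨ ψ for some valuation V' (over the same rooted frame). -/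
def Serial {W : Type} (R : W → W → Prop) : Prop := ∀ w, ∃ u, R w u

def IsPath {W : Type} (R : W → W → Prop) (π : ℕ → W) : Prop := ∀ i, R (π i) (π (i+1))

structure Kripke (W : Type) where
  R : W → W → Prop
  V : ℕ → W → Prop

/-- CTL formulas over the Boolean base `{⊤, ¬, ∧, ∨}` (a base containing `∧` and `⊤`). -/
inductive CTL where
  | tr   : CTL
  | atom : ℕ → CTL
  | neg  : CTL → CTL
  | and  : CTL → CTL → CTL
  | or   : CTL → CTL → CTL
  | AX : CTL → CTL
  | EX : CTL → CTL
  | AF : CTL → CTL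
  | EF : CTL → CTL
  | AG : CTL → CTL
  | EG : CTL → CTL
  | AU : CTL → CTL → CTL
  | EU : CTL → CTL → CTL
  | AR : CTL → CTL → CTL
  | ER : CTL → CTL → CTL

def sat {W : Type} (K : Kripke W) : CTL → W → Prop
  | .tr, _ => True
  | .atom p, w => K.V p w
  | .neg φ, w => ¬ sat K φ w
  | .and φ ψ, w => sat K φ w ∧ sat K ψ w
  | .or φ ψ, w => sat K φ w ∨ sat K ψ w
  | .AX φ, w => ∀ π : ℕ → W, IsPath K.R π → π 0 = w → sat K φ (π 1)
  | .EX φ, w => ∃ π : ℕ → W, IsPath K.R π ∧ π 0 = w ∧ sat K φ (π 1)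
  | .AF φ, w => ∀ π : ℕ → W, IsPath K.R π → π 0 = w → ∃ i, sat K φ (π i)
  | .EF φ, w => ∃ π : ℕ → W, IsPath K.R π ∧ π 0 = w ∧ ∃ i, sat K φ (π i)
  | .AG φ, w => ∀ π : ℕ → W, IsPath K.R π → π 0 = w → ∀ i, sat K φ (π i)
  | .EG φ, w => ∃ π : ℕ → W, IsPath K.R π ∧ π 0 = w ∧ ∀ i, sat K φ (π i)
  | .AU φ ψ, w => ∀ π : ℕ → W, IsPath K.R π → π 0 = w →
      ∃ i, sat K ψ (π i) ∧ ∀ j, j < i → sat K φ (π j)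
  | .EU φ ψ, w => ∃ π : ℕ → W, IsPath K.R π ∧ π 0 = w ∧
      ∃ i, sat K ψ (π i) ∧ ∀ j, j < i → sat K φ (π j)
  | .AR φ ψ, w => ∀ π : ℕ → W, IsPath K.R π → π 0 = w →
      ∀ i, sat K ψ (π i) ∨ ∃ j, j < i ∧ sat K φ (π j)
  | .ER φ ψ, w => ∃ π : ℕ → W, IsPath K.R π ∧ π 0 = w ∧
      ∀ i, sat K ψ (π i) ∨ ∃ j, j < i ∧ sat K φ (π j)

/-- Temporal depth. -/
def CTL.td : CTL → ℕ
  | .tr => 0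
  | .atom _ => 0
  | .neg φ => φ.td
  | .and φ ψ => max φ.td ψ.td
  | .or φ ψ => max φ.td ψ.td
  | .AX φ => φ.td + 1
  | .EX φ => φ.td + 1
  | .AF φ => φ.td + 1
  | .EF φ => φ.td + 1
  | .AG φ => φ.td + 1
  | .EG φ => φ.td + 1
  | .AU φ ψ => max φ.td ψ.td + 1
  | .EU φ ψ => max φ.td ψ.td + 1
  | .AR φ ψ => max φ.td ψ.td + 1
  | .ER φ ψ => max φ.td ψ.td + 1

/-- Occurrence of an atomic proposition in a formula. -/
def AtomOccurs (p : ℕ) : CTL → Prop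
  | .tr => False
  | .atom q => p = q
  | .neg φ => AtomOccurs p φ
  | .and φ ψ => AtomOccurs p φ ∨ AtomOccurs p ψ
  | .or φ ψ => AtomOccurs p φ ∨ AtomOccurs p ψ
  | .AX φ => AtomOccurs p φ
  | .EX φ => AtomOccurs p φ
  | .AF φ => AtomOccurs p φ
  | .EF φ => AtomOccurs p φ
  | .AG φ => AtomOccurs p φ
  | .EG φ => AtomOccurs p φ
  | .AU φ ψ => AtomOccurs p φ ∨ AtomOccurs p ψ
  | .EU φ ψ => AtomOccurs p φ ∨ AtomOccurs p ψ
  | .AR φ ψ => AtomOccurs p φ ∨ AtomOccurs p ψ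
  | .ER φ ψ => AtomOccurs p φ ∨ AtomOccurs p ψ

/-- Pseudo-monotonicity over the base `{⊤, ¬, ∧, ∨}`: the formula, and every argument
of a temporal operator in it, is a Boolean combination of non-Boolean formulas that is
monotone in every argument of nonzero temporal depth — i.e. negation is applied only
to purely propositional formulas. -/
def PseudoMonotone : CTL → Prop
  | .tr => True
  | .atom _ => True
  | .neg φ => φ.td = 0
  | .and φ ψ => PseudoMonotone φ ∧ PseudoMonotone ψ
  | .or φ ψ => PseudoMonotone φ ∧ PseudoMonotone ψ
  | .AX φ => PseudoMonotone φ
  | .EX φ => PseudoMonotone φ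
  | .AF φ => PseudoMonotone φ
  | .EF φ => PseudoMonotone φ
  | .AG φ => PseudoMonotone φ
  | .EG φ => PseudoMonotone φ
  | .AU φ ψ => PseudoMonotone φ ∧ PseudoMonotone ψ
  | .EU φ ψ => PseudoMonotone φ ∧ PseudoMonotone ψ
  | .AR φ ψ => PseudoMonotone φ ∧ PseudoMonotone ψ
  | .ER φ ψ => PseudoMonotone φ ∧ PseudoMonotone ψ

/-- `relativize t φ`: replace every occurrence of `⊤` by the fresh proposition `t` and
relativize every temporal argument `ξ` to `ξ ∧ t`. -/
def relativize (t : ℕ) : CTL → CTL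
  | .tr => .atom t
  | .atom p => .atom p
  | .neg φ => .neg (relativize t φ)
  | .and φ ψ => .and (relativize t φ) (relativize t ψ)
  | .or φ ψ => .or (relativize t φ) (relativize t ψ)
  | .AX φ => .AX (.and (relativize t φ) (.atom t))
  | .EX φ => .EX (.and (relativize t φ) (.atom t))
  | .AF φ => .AF (.and (relativize t φ) (.atom t))
  | .EF φ => .EF (.and (relativize t φ) (.atom t))
  | .AG φ => .AG (.and (relativize t φ) (.atom t))
  | .EG φ => .EG (.and (relativize t φ) (.atom t))
  | .AU φ ψ => .AU (.and (relativize t φ) (.atom t)) (.and (relativize t ψ) (.atom t))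
  | .EU φ ψ => .EU (.and (relativize t φ) (.atom t)) (.and (relativize t ψ) (.atom t))
  | .AR φ ψ => .AR (.and (relativize t φ) (.atom t)) (.and (relativize t ψ) (.atom t))
  | .ER φ ψ => .ER (.and (relativize t φ) (.atom t)) (.and (relativize t ψ) (.atom t))


/-- Satisfaction only depends on the atoms occurring in the formula. -/
lemma sat_agree {W : Type} (R : W → W → Prop) (V V₂ : ℕ → W → Prop) :
    ∀ φ : CTL, (∀ p, AtomOccurs p φ → ∀ u, V p u ↔ V₂ p u) →
    ∀ w, sat ⟨R, V⟩ φ w ↔ sat ⟨R, V₂⟩ φ w := by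
  intro φ
  induction φ with
  | tr => intro _ w; simp [sat]
  | atom p => intro h w; simpa [sat] using h p rfl w
  | neg φ ih => intro h w; have i1 := ih h; simp [sat, i1]
  | and φ ψ ih1 ih2 =>
      intro h w
      have i1 := ih1 (fun p hp => h p (Or.inl hp))
      have i2 := ih2 (fun p hp => h p (Or.inr hp))
      simp [sat, i1, i2]
  | or φ ψ ih1 ih2 =>
      intro h w
      have i1 := ih1 (fun p hp => h p (Or.inl hp))
      have i2 := ih2 (fun p hp => h p (Or.inr hp))
      simp [sat, i1, i2]
  | AX φ ih => intro h w; have i1 := ih h; simp [sat, i1]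
  | EX φ ih => intro h w; have i1 := ih h; simp [sat, i1]
  | AF φ ih => intro h w; have i1 := ih h; simp [sat, i1]
  | EF φ ih => intro h w; have i1 := ih h; simp [sat, i1]
  | AG φ ih => intro h w; have i1 := ih h; simp [sat, i1]
  | EG φ ih => intro h w; have i1 := ih h; simp [sat, i1]
  | AU φ ψ ih1 ih2 =>
      intro h w
      have i1 := ih1 (fun p hp => h p (Or.inl hp))
      have i2 := ih2 (fun p hp => h p (Or.inr hp))
      simp [sat, i1, i2]
  | EU φ ψ ih1 ih2 =>
      intro h w
      have i1 := ih1 (fun p hp => h p (Or.inl hp))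
      have i2 := ih2 (fun p hp => h p (Or.inr hp))
      simp [sat, i1, i2]
  | AR φ ψ ih1 ih2 =>
      intro h w
      have i1 := ih1 (fun p hp => h p (Or.inl hp))
      have i2 := ih2 (fun p hp => h p (Or.inr hp))
      simp [sat, i1, i2]
  | ER φ ψ ih1 ih2 =>
      intro h w
      have i1 := ih1 (fun p hp => h p (Or.inl hp))
      have i2 := ih2 (fun p hp => h p (Or.inr hp))
      simp [sat, i1, i2]

/-- If `t` holds everywhere, relativizing at `t` does not change satisfaction. -/
lemma sat_relativize_of_top {W : Type} (R : W → W → Prop) (V : ℕ → W → Prop)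
    (t : ℕ) (ht : ∀ u, V t u) :
    ∀ φ : CTL, ∀ w, sat ⟨R, V⟩ (relativize t φ) w ↔ sat ⟨R, V⟩ φ w := by
  intro φ
  induction φ with
  | tr => intro w; simp [sat, relativize, ht]
  | atom p => intro w; simp [sat, relativize]
  | neg φ ih => intro w; simp [sat, relativize, ih]
  | and φ ψ ih1 ih2 => intro w; simp [sat, relativize, ih1, ih2]
  | or φ ψ ih1 ih2 => intro w; simp [sat, relativize, ih1, ih2]
  | AX φ ih => intro w; simp [sat, relativize, ih, ht]
  | EX φ ih => intro w; simp [sat, relativize, ih, ht]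
  | AF φ ih => intro w; simp [sat, relativize, ih, ht]
  | EF φ ih => intro w; simp [sat, relativize, ih, ht]
  | AG φ ih => intro w; simp [sat, relativize, ih, ht]
  | EG φ ih => intro w; simp [sat, relativize, ih, ht]
  | AU φ ψ ih1 ih2 => intro w; simp [sat, relativize, ih1, ih2, ht]
  | EU φ ψ ih1 ih2 => intro w; simp [sat, relativize, ih1, ih2, ht]
  | AR φ ψ ih1 ih2 => intro w; simp [sat, relativize, ih1, ih2, ht]
  | ER φ ψ ih1 ih2 => intro w; simp [sat, relativize, ih1, ih2, ht]

/-- For temporal-depth-zero formulas, at a world where `t` already holds,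
enlarging the valuation at `t` does not change the relativized formula. -/
lemma sat_td_zero {W : Type} (R : W → W → Prop) (V : ℕ → W → Prop) (t : ℕ) :
    ∀ φ : CTL, φ.td = 0 → ∀ w, V t w →
      (sat ⟨R, fun p u => V p u ∨ p = t⟩ (relativize t φ) w ↔
        sat ⟨R, V⟩ (relativize t φ) w) := by
  intro φ
  induction φ with
  | tr => intro _ w hw; simp [sat, relativize, hw]
  | atom p =>
      intro _ w hw
      simp only [sat, relativize]
      exact ⟨fun h => h.elim id (fun e => e ▸ hw), Or.inl⟩
  | neg φ ih =>
      intro h w hw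
      simp only [CTL.td] at h
      simp [sat, relativize, ih h w hw]
  | and φ ψ ih1 ih2 =>
      intro h w hw
      simp only [CTL.td, Nat.max_eq_zero_iff] at h
      simp [sat, relativize, ih1 h.1 w hw, ih2 h.2 w hw]
  | or φ ψ ih1 ih2 =>
      intro h w hw
      simp only [CTL.td, Nat.max_eq_zero_iff] at h
      simp [sat, relativize, ih1 h.1 w hw, ih2 h.2 w hw]
  | AX φ ih => intro h; simp [CTL.td] at h
  | EX φ ih => intro h; simp [CTL.td] at h
  | AF φ ih => intro h; simp [CTL.td] at h
  | EF φ ih => intro h; simp [CTL.td] at h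
  | AG φ ih => intro h; simp [CTL.td] at h
  | EG φ ih => intro h; simp [CTL.td] at h
  | AU φ ψ ih1 ih2 => intro h; simp [CTL.td] at h
  | EU φ ψ ih1 ih2 => intro h; simp [CTL.td] at h
  | AR φ ψ ih1 ih2 => intro h; simp [CTL.td] at h
  | ER φ ψ ih1 ih2 => intro h; simp [CTL.td] at h

/-- Monotonicity step: enlarging the valuation at `t` preserves relativized
pseudo-monotone formulas at worlds where `t` already holds. -/
lemma sat_mono {W : Type} (R : W → W → Prop) (V : ℕ → W → Prop) (t : ℕ) :
    ∀ φ : CTL, PseudoMonotone φ → ∀ w, sat ⟨R, V⟩ (relativize t φ) w → V t w →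
      sat ⟨R, fun p u => V p u ∨ p = t⟩ (relativize t φ) w := by
  intro φ
  induction φ with
  | tr => intro _ w _ _; exact Or.inr rfl
  | atom p => intro _ w h _; exact Or.inl h
  | neg φ ih =>
      intro hpm w h hw
      simp only [sat, relativize] at h ⊢
      rw [sat_td_zero R V t φ hpm w hw]
      exact h
  | and φ ψ ih1 ih2 =>
      intro hpm w h hw
      exact ⟨ih1 hpm.1 w h.1 hw, ih2 hpm.2 w h.2 hw⟩
  | or φ ψ ih1 ih2 =>
      intro hpm w h hw
      exact h.elim (fun h => Or.inl (ih1 hpm.1 w h hw)) (fun h => Or.inr (ih2 hpm.2 w h hw))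
  | AX φ ih =>
      intro hpm w h hw
      intro π hπ h0
      obtain ⟨h1, h2⟩ := h π hπ h0
      exact ⟨ih hpm _ h1 h2, Or.inr rfl⟩
  | EX φ ih =>
      intro hpm w h hw
      obtain ⟨π, hπ, h0, h1, h2⟩ := h
      exact ⟨π, hπ, h0, ih hpm _ h1 h2, Or.inr rfl⟩
  | AF φ ih =>
      intro hpm w h hw
      intro π hπ h0
      obtain ⟨i, h1, h2⟩ := h π hπ h0
      exact ⟨i, ih hpm _ h1 h2, Or.inr rfl⟩
  | EF φ ih =>
      intro hpm w h hw
      obtain ⟨π, hπ, h0, i, h1, h2⟩ := h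
      exact ⟨π, hπ, h0, i, ih hpm _ h1 h2, Or.inr rfl⟩
  | AG φ ih =>
      intro hpm w h hw
      intro π hπ h0 i
      obtain ⟨h1, h2⟩ := h π hπ h0 i
      exact ⟨ih hpm _ h1 h2, Or.inr rfl⟩
  | EG φ ih =>
      intro hpm w h hw
      obtain ⟨π, hπ, h0, hi⟩ := h
      exact ⟨π, hπ, h0, fun i => ⟨ih hpm _ (hi i).1 (hi i).2, Or.inr rfl⟩⟩
  | AU φ ψ ih1 ih2 =>
      intro hpm w h hw
      intro π hπ h0
      obtain ⟨i, hb, ha⟩ := h π hπ h0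
      exact ⟨i, ⟨ih2 hpm.2 _ hb.1 hb.2, Or.inr rfl⟩,
        fun j hj => ⟨ih1 hpm.1 _ (ha j hj).1 (ha j hj).2, Or.inr rfl⟩⟩
  | EU φ ψ ih1 ih2 =>
      intro hpm w h hw
      obtain ⟨π, hπ, h0, i, hb, ha⟩ := h
      exact ⟨π, hπ, h0, i, ⟨ih2 hpm.2 _ hb.1 hb.2, Or.inr rfl⟩,
        fun j hj => ⟨ih1 hpm.1 _ (ha j hj).1 (ha j hj).2, Or.inr rfl⟩⟩
  | AR φ ψ ih1 ih2 =>
      intro hpm w h hw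
      intro π hπ h0 i
      rcases h π hπ h0 i with hb | ⟨j, hj, ha⟩
      · exact Or.inl ⟨ih2 hpm.2 _ hb.1 hb.2, Or.inr rfl⟩
      · exact Or.inr ⟨j, hj, ih1 hpm.1 _ ha.1 ha.2, Or.inr rfl⟩
  | ER φ ψ ih1 ih2 =>
      intro hpm w h hw
      obtain ⟨π, hπ, h0, hi⟩ := h
      refine ⟨π, hπ, h0, fun i => ?_⟩
      rcases hi i with hb | ⟨j, hj, ha⟩
      · exact Or.inl ⟨ih2 hpm.2 _ hb.1 hb.2, Or.inr rfl⟩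
      · exact Or.inr ⟨j, hj, ih1 hpm.1 _ ha.1 ha.2, Or.inr rfl⟩

/-- Substituting `⊤` by a fresh proposition `t` in a pseudo-monotone CTL formula
preserves satisfiability over the same rooted serial frames: `φ` and
`ψ := relativize t φ ∧ t` are frame-equivalent. -/
theorem pseudoMonotone_top_substitution_frame_equivalent
    (φ : CTL) (t : ℕ) (hpm : PseudoMonotone φ) (hfresh : ¬ AtomOccurs t φ) :
    ∀ (W : Type) (R : W → W → Prop) (w : W), Serial R →
      ((∃ V : ℕ → W → Prop, sat ⟨R, V⟩ φ w) ↔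
       (∃ V' : ℕ → W → Prop, sat ⟨R, V'⟩ (.and (relativize t φ) (.atom t)) w)) := by
  intro W R w _hser
  constructor
  · rintro ⟨V, hV⟩
    refine ⟨fun p u => V p u ∨ p = t, ?_, Or.inr rfl⟩
    have ht : ∀ u, (fun (p : ℕ) (u : W) => V p u ∨ p = t) t u := fun u => Or.inr rfl
    rw [sat_relativize_of_top R _ t ht φ w]
    have hag : ∀ p, AtomOccurs p φ → ∀ u, V p u ↔ (V p u ∨ p = t) := by
      intro p hp u
      refine ⟨Or.inl, fun h => h.elim id (fun e => absurd (e ▸ hp) hfresh)⟩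
    exact (sat_agree R V _ φ hag w).mp hV
  · rintro ⟨V', hV'⟩
    obtain ⟨h1, h2⟩ := hV'
    have hmono := sat_mono R V' t φ hpm w h1 h2
    have ht : ∀ u, (fun (p : ℕ) (u : W) => V' p u ∨ p = t) t u := fun u => Or.inr rfl
    exact ⟨_, (sat_relativize_of_top R _ t ht φ w).mp hmono⟩
end
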